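/- Geometric lemma (existence form): there exist a finite set Λ ⊂ 𝕊² ∩ ℚ³, for each k ∈ Λ unit vectors k̄, k̄̄ making (k, k̄, k̄̄) orthonormal, a radius ε > 0, and smooth functions a_k : B_ε(Id) → ℝ defined on the ε-ball around the identity in the space of 3×3 symmetric matrices, such that every positive definite symmetric matrix R ∈ B_ε(Id) satisfies R = Σ_{k∈Λ} a_k(R)² k̄ ⊗ k̄. -/

import Mathlib

noncomputable def sq2 : ℝ := (Real.sqrt 2)⁻¹

lemma sq2_mul_sq2 : sq2 * sq2 = 1/2 := by
  rw [sq2, ← mul_inv, Real.mul_self_sqrt (by norm_num)]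
  norm_num

lemma sq2_sq : sq2 ^ 2 = 1/2 := by rw [sq, sq2_mul_sq2]

section vec3
variable {α : Type*} (a b c : α)
@[simp] lemma vec3_mk0 (h : 0 < 3) : ![a,b,c] ⟨0, h⟩ = a := rfl
@[simp] lemma vec3_mk1 (h : 1 < 3) : ![a,b,c] ⟨1, h⟩ = b := rfl
@[simp] lemma vec3_mk2 (h : 2 < 3) : ![a,b,c] ⟨2, h⟩ = c := rfl
@[simp] lemma fin3_mk0 (h : 0 < 3) : (⟨0, h⟩ : Fin 3) = 0 := rfl
@[simp] lemma fin3_mk1 (h : 1 < 3) : (⟨1, h⟩ : Fin 3) = 1 := rfl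
@[simp] lemma fin3_mk2 (h : 2 < 3) : (⟨2, h⟩ : Fin 3) = 2 := rfl
end vec3

lemma sum9 {M : Type*} [AddCommMonoid M] (f : Fin 9 → M) :
    ∑ j, f j = f 0 + f 1 + f 2 + f 3 + f 4 + f 5 + f 6 + f 7 + f 8 := by
  simp [Fin.sum_univ_succ, add_assoc]

lemma entry_lt {R : Fin 3 → Fin 3 → ℝ}
    (h : R ∈ Metric.ball (fun i i' : Fin 3 => if i = i' then (1:ℝ) else 0) (1/4))
    (i i' : Fin 3) : |R i i' - (if i = i' then (1:ℝ) else 0)| < 1/4 := by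
  have h1 := (dist_pi_lt_iff (by norm_num)).1 (Metric.mem_ball.1 h) i
  have h2 := (dist_pi_lt_iff (by norm_num)).1 h1 i'
  rwa [Real.dist_eq] at h2

lemma eval_contDiff (i i' : Fin 3) :
    ContDiff ℝ (⊤ : WithTop ℕ∞) (fun R : Fin 3 → Fin 3 → ℝ => R i i') :=
  contDiff_apply_apply ℝ ℝ i i'

lemma smooth_sqrt_aff {f : (Fin 3 → Fin 3 → ℝ) → ℝ} (hf : ContDiff ℝ (⊤ : WithTop ℕ∞) f)
    {S : Set (Fin 3 → Fin 3 → ℝ)} (hpos : ∀ x ∈ S, 0 < f x) :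
    ContDiffOn ℝ ((⊤ : ℕ∞) : WithTop ℕ∞) (fun R => Real.sqrt (f R)) S := fun x hx =>
  ((Real.contDiffAt_sqrt (ne_of_gt (hpos x hx))).comp x (hf.of_le le_top).contDiffAt).contDiffWithinAt

noncomputable def KK : Fin 9 → Fin 3 → ℝ
  | 0 => ![0,1,0]
  | 1 => ![0,0,1]
  | 2 => ![1,0,0]
  | 3 => ![0,0,1]
  | 4 => ![0,0,1]
  | 5 => ![0,1,0]
  | 6 => ![0,1,0]
  | 7 => ![1,0,0]
  | 8 => ![1,0,0]

noncomputable def KB : Fin 9 → Fin 3 → ℝ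
  | 0 => ![1,0,0]
  | 1 => ![0,1,0]
  | 2 => ![0,0,1]
  | 3 => ![sq2,sq2,0]
  | 4 => ![sq2,-sq2,0]
  | 5 => ![sq2,0,sq2]
  | 6 => ![sq2,0,-sq2]
  | 7 => ![0,sq2,sq2]
  | 8 => ![0,sq2,-sq2]

noncomputable def KBB : Fin 9 → Fin 3 → ℝ
  | 0 => ![0,0,1]
  | 1 => ![1,0,0]
  | 2 => ![0,1,0]
  | 3 => ![sq2,-sq2,0]
  | 4 => ![sq2,sq2,0]
  | 5 => ![sq2,0,-sq2]
  | 6 => ![sq2,0,sq2]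
  | 7 => ![0,sq2,-sq2]
  | 8 => ![0,sq2,sq2]

noncomputable def AA : Fin 9 → (Fin 3 → Fin 3 → ℝ) → ℝ
  | 0 => fun R => Real.sqrt (R 0 0 - 1/2)
  | 1 => fun R => Real.sqrt (R 1 1 - 1/2)
  | 2 => fun R => Real.sqrt (R 2 2 - 1/2)
  | 3 => fun R => Real.sqrt (1/4 + R 0 1)
  | 4 => fun R => Real.sqrt (1/4 - R 0 1)
  | 5 => fun R => Real.sqrt (1/4 + R 0 2)
  | 6 => fun R => Real.sqrt (1/4 - R 0 2)
  | 7 => fun R => Real.sqrt (1/4 + R 1 2)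
  | 8 => fun R => Real.sqrt (1/4 - R 1 2)


@[simp] lemma KK_0 : KK 0 = (![0,1,0] : Fin 3 → ℝ) := rfl
@[simp] lemma KK_mk0 (h : 0 < 9) : KK ⟨0, h⟩ = (![0,1,0] : Fin 3 → ℝ) := rfl
@[simp] lemma KK_1 : KK 1 = (![0,0,1] : Fin 3 → ℝ) := rfl
@[simp] lemma KK_mk1 (h : 1 < 9) : KK ⟨1, h⟩ = (![0,0,1] : Fin 3 → ℝ) := rfl
@[simp] lemma KK_2 : KK 2 = (![1,0,0] : Fin 3 → ℝ) := rfl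
@[simp] lemma KK_mk2 (h : 2 < 9) : KK ⟨2, h⟩ = (![1,0,0] : Fin 3 → ℝ) := rfl
@[simp] lemma KK_3 : KK 3 = (![0,0,1] : Fin 3 → ℝ) := rfl
@[simp] lemma KK_mk3 (h : 3 < 9) : KK ⟨3, h⟩ = (![0,0,1] : Fin 3 → ℝ) := rfl
@[simp] lemma KK_4 : KK 4 = (![0,0,1] : Fin 3 → ℝ) := rfl
@[simp] lemma KK_mk4 (h : 4 < 9) : KK ⟨4, h⟩ = (![0,0,1] : Fin 3 → ℝ) := rfl
@[simp] lemma KK_5 : KK 5 = (![0,1,0] : Fin 3 → ℝ) := rfl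
@[simp] lemma KK_mk5 (h : 5 < 9) : KK ⟨5, h⟩ = (![0,1,0] : Fin 3 → ℝ) := rfl
@[simp] lemma KK_6 : KK 6 = (![0,1,0] : Fin 3 → ℝ) := rfl
@[simp] lemma KK_mk6 (h : 6 < 9) : KK ⟨6, h⟩ = (![0,1,0] : Fin 3 → ℝ) := rfl
@[simp] lemma KK_7 : KK 7 = (![1,0,0] : Fin 3 → ℝ) := rfl
@[simp] lemma KK_mk7 (h : 7 < 9) : KK ⟨7, h⟩ = (![1,0,0] : Fin 3 → ℝ) := rfl
@[simp] lemma KK_8 : KK 8 = (![1,0,0] : Fin 3 → ℝ) := rfl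
@[simp] lemma KK_mk8 (h : 8 < 9) : KK ⟨8, h⟩ = (![1,0,0] : Fin 3 → ℝ) := rfl

@[simp] lemma KB_0 : KB 0 = (![1,0,0] : Fin 3 → ℝ) := rfl
@[simp] lemma KB_mk0 (h : 0 < 9) : KB ⟨0, h⟩ = (![1,0,0] : Fin 3 → ℝ) := rfl
@[simp] lemma KB_1 : KB 1 = (![0,1,0] : Fin 3 → ℝ) := rfl
@[simp] lemma KB_mk1 (h : 1 < 9) : KB ⟨1, h⟩ = (![0,1,0] : Fin 3 → ℝ) := rfl
@[simp] lemma KB_2 : KB 2 = (![0,0,1] : Fin 3 → ℝ) := rfl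
@[simp] lemma KB_mk2 (h : 2 < 9) : KB ⟨2, h⟩ = (![0,0,1] : Fin 3 → ℝ) := rfl
@[simp] lemma KB_3 : KB 3 = (![sq2,sq2,0] : Fin 3 → ℝ) := rfl
@[simp] lemma KB_mk3 (h : 3 < 9) : KB ⟨3, h⟩ = (![sq2,sq2,0] : Fin 3 → ℝ) := rfl
@[simp] lemma KB_4 : KB 4 = (![sq2,-sq2,0] : Fin 3 → ℝ) := rfl
@[simp] lemma KB_mk4 (h : 4 < 9) : KB ⟨4, h⟩ = (![sq2,-sq2,0] : Fin 3 → ℝ) := rfl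
@[simp] lemma KB_5 : KB 5 = (![sq2,0,sq2] : Fin 3 → ℝ) := rfl
@[simp] lemma KB_mk5 (h : 5 < 9) : KB ⟨5, h⟩ = (![sq2,0,sq2] : Fin 3 → ℝ) := rfl
@[simp] lemma KB_6 : KB 6 = (![sq2,0,-sq2] : Fin 3 → ℝ) := rfl
@[simp] lemma KB_mk6 (h : 6 < 9) : KB ⟨6, h⟩ = (![sq2,0,-sq2] : Fin 3 → ℝ) := rfl
@[simp] lemma KB_7 : KB 7 = (![0,sq2,sq2] : Fin 3 → ℝ) := rfl
@[simp] lemma KB_mk7 (h : 7 < 9) : KB ⟨7, h⟩ = (![0,sq2,sq2] : Fin 3 → ℝ) := rfl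
@[simp] lemma KB_8 : KB 8 = (![0,sq2,-sq2] : Fin 3 → ℝ) := rfl
@[simp] lemma KB_mk8 (h : 8 < 9) : KB ⟨8, h⟩ = (![0,sq2,-sq2] : Fin 3 → ℝ) := rfl

@[simp] lemma KBB_0 : KBB 0 = (![0,0,1] : Fin 3 → ℝ) := rfl
@[simp] lemma KBB_mk0 (h : 0 < 9) : KBB ⟨0, h⟩ = (![0,0,1] : Fin 3 → ℝ) := rfl
@[simp] lemma KBB_1 : KBB 1 = (![1,0,0] : Fin 3 → ℝ) := rfl
@[simp] lemma KBB_mk1 (h : 1 < 9) : KBB ⟨1, h⟩ = (![1,0,0] : Fin 3 → ℝ) := rfl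
@[simp] lemma KBB_2 : KBB 2 = (![0,1,0] : Fin 3 → ℝ) := rfl
@[simp] lemma KBB_mk2 (h : 2 < 9) : KBB ⟨2, h⟩ = (![0,1,0] : Fin 3 → ℝ) := rfl
@[simp] lemma KBB_3 : KBB 3 = (![sq2,-sq2,0] : Fin 3 → ℝ) := rfl
@[simp] lemma KBB_mk3 (h : 3 < 9) : KBB ⟨3, h⟩ = (![sq2,-sq2,0] : Fin 3 → ℝ) := rfl
@[simp] lemma KBB_4 : KBB 4 = (![sq2,sq2,0] : Fin 3 → ℝ) := rfl
@[simp] lemma KBB_mk4 (h : 4 < 9) : KBB ⟨4, h⟩ = (![sq2,sq2,0] : Fin 3 → ℝ) := rfl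
@[simp] lemma KBB_5 : KBB 5 = (![sq2,0,-sq2] : Fin 3 → ℝ) := rfl
@[simp] lemma KBB_mk5 (h : 5 < 9) : KBB ⟨5, h⟩ = (![sq2,0,-sq2] : Fin 3 → ℝ) := rfl
@[simp] lemma KBB_6 : KBB 6 = (![sq2,0,sq2] : Fin 3 → ℝ) := rfl
@[simp] lemma KBB_mk6 (h : 6 < 9) : KBB ⟨6, h⟩ = (![sq2,0,sq2] : Fin 3 → ℝ) := rfl
@[simp] lemma KBB_7 : KBB 7 = (![0,sq2,-sq2] : Fin 3 → ℝ) := rfl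
@[simp] lemma KBB_mk7 (h : 7 < 9) : KBB ⟨7, h⟩ = (![0,sq2,-sq2] : Fin 3 → ℝ) := rfl
@[simp] lemma KBB_8 : KBB 8 = (![0,sq2,sq2] : Fin 3 → ℝ) := rfl
@[simp] lemma KBB_mk8 (h : 8 < 9) : KBB ⟨8, h⟩ = (![0,sq2,sq2] : Fin 3 → ℝ) := rfl

@[simp] lemma AA_0 : AA 0 = (fun R => Real.sqrt (R 0 0 - 1/2) : (Fin 3 → Fin 3 → ℝ) → ℝ) := rfl
@[simp] lemma AA_mk0 (h : 0 < 9) : AA ⟨0, h⟩ = (fun R => Real.sqrt (R 0 0 - 1/2) : (Fin 3 → Fin 3 → ℝ) → ℝ) := rfl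
@[simp] lemma AA_1 : AA 1 = (fun R => Real.sqrt (R 1 1 - 1/2) : (Fin 3 → Fin 3 → ℝ) → ℝ) := rfl
@[simp] lemma AA_mk1 (h : 1 < 9) : AA ⟨1, h⟩ = (fun R => Real.sqrt (R 1 1 - 1/2) : (Fin 3 → Fin 3 → ℝ) → ℝ) := rfl
@[simp] lemma AA_2 : AA 2 = (fun R => Real.sqrt (R 2 2 - 1/2) : (Fin 3 → Fin 3 → ℝ) → ℝ) := rfl
@[simp] lemma AA_mk2 (h : 2 < 9) : AA ⟨2, h⟩ = (fun R => Real.sqrt (R 2 2 - 1/2) : (Fin 3 → Fin 3 → ℝ) → ℝ) := rfl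
@[simp] lemma AA_3 : AA 3 = (fun R => Real.sqrt (1/4 + R 0 1) : (Fin 3 → Fin 3 → ℝ) → ℝ) := rfl
@[simp] lemma AA_mk3 (h : 3 < 9) : AA ⟨3, h⟩ = (fun R => Real.sqrt (1/4 + R 0 1) : (Fin 3 → Fin 3 → ℝ) → ℝ) := rfl
@[simp] lemma AA_4 : AA 4 = (fun R => Real.sqrt (1/4 - R 0 1) : (Fin 3 → Fin 3 → ℝ) → ℝ) := rfl
@[simp] lemma AA_mk4 (h : 4 < 9) : AA ⟨4, h⟩ = (fun R => Real.sqrt (1/4 - R 0 1) : (Fin 3 → Fin 3 → ℝ) → ℝ) := rfl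
@[simp] lemma AA_5 : AA 5 = (fun R => Real.sqrt (1/4 + R 0 2) : (Fin 3 → Fin 3 → ℝ) → ℝ) := rfl
@[simp] lemma AA_mk5 (h : 5 < 9) : AA ⟨5, h⟩ = (fun R => Real.sqrt (1/4 + R 0 2) : (Fin 3 → Fin 3 → ℝ) → ℝ) := rfl
@[simp] lemma AA_6 : AA 6 = (fun R => Real.sqrt (1/4 - R 0 2) : (Fin 3 → Fin 3 → ℝ) → ℝ) := rfl
@[simp] lemma AA_mk6 (h : 6 < 9) : AA ⟨6, h⟩ = (fun R => Real.sqrt (1/4 - R 0 2) : (Fin 3 → Fin 3 → ℝ) → ℝ) := rfl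
@[simp] lemma AA_7 : AA 7 = (fun R => Real.sqrt (1/4 + R 1 2) : (Fin 3 → Fin 3 → ℝ) → ℝ) := rfl
@[simp] lemma AA_mk7 (h : 7 < 9) : AA ⟨7, h⟩ = (fun R => Real.sqrt (1/4 + R 1 2) : (Fin 3 → Fin 3 → ℝ) → ℝ) := rfl
@[simp] lemma AA_8 : AA 8 = (fun R => Real.sqrt (1/4 - R 1 2) : (Fin 3 → Fin 3 → ℝ) → ℝ) := rfl
@[simp] lemma AA_mk8 (h : 8 < 9) : AA ⟨8, h⟩ = (fun R => Real.sqrt (1/4 - R 1 2) : (Fin 3 → Fin 3 → ℝ) → ℝ) := rfl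


set_option maxHeartbeats 1000000 in
/-- geometric lemma (existence form): a finite family of rational unit
vectors `k` with completed orthonormal frames `(k, k̄, k̄̄)` and smooth amplitudes
`a_k` on a ball around the identity such that every positive definite symmetric
matrix `R` near `Id` decomposes as `R = Σ_k a_k(R)² k̄ ⊗ k̄`. -/
theorem stmt_5 :
    ∃ (n : ℕ) (k kb kbb : Fin n → Fin 3 → ℝ) (ε : ℝ)
      (a : Fin n → (Fin 3 → Fin 3 → ℝ) → ℝ),
      0 < n ∧ 0 < ε ∧
      (∀ j : Fin n,
        (∀ i, ∃ q : ℚ, k j i = (q : ℝ)) ∧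
        (∑ i, k j i * k j i) = 1 ∧ (∑ i, kb j i * kb j i) = 1 ∧
        (∑ i, kbb j i * kbb j i) = 1 ∧
        (∑ i, k j i * kb j i) = 0 ∧ (∑ i, k j i * kbb j i) = 0 ∧
        (∑ i, kb j i * kbb j i) = 0) ∧
      (∀ j : Fin n, ContDiffOn ℝ (⊤ : ℕ∞) (a j)
        (Metric.ball (fun i i' : Fin 3 => if i = i' then (1:ℝ) else 0) ε)) ∧
      (∀ R : Fin 3 → Fin 3 → ℝ,
        (∀ i i', R i i' = R i' i) →
        R ∈ Metric.ball (fun i i' : Fin 3 => if i = i' then (1:ℝ) else 0) ε →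
        (∀ v : Fin 3 → ℝ, v ≠ 0 → 0 < ∑ i, ∑ i', v i * R i i' * v i') →
        R = ∑ j, (a j R) ^ 2 • (fun i i' => kb j i * kb j i')) := by
  refine ⟨9, KK, KB, KBB, 1/4, AA, by norm_num, by norm_num, ?_, ?_, ?_⟩
  · intro j
    fin_cases j <;>
      refine ⟨fun i => by
          fin_cases i <;>
            first
              | (refine ⟨0, ?_⟩; simp; done)
              | (refine ⟨1, ?_⟩; simp; done),
        ?_, ?_, ?_, ?_, ?_, ?_⟩ <;>
      · simp [Fin.sum_univ_three]
        try ring_nf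
        try norm_num [sq2_sq]
  · intro j
    fin_cases j
    · simp only [AA_mk0]
      apply smooth_sqrt_aff (f := fun R => R 0 0 - 1/2) ((eval_contDiff 0 0).sub contDiff_const)
      intro x hx
      have := abs_lt.1 (by simpa using entry_lt hx 0 0)
      linarith [this.1]
    · simp only [AA_mk1]
      apply smooth_sqrt_aff (f := fun R => R 1 1 - 1/2) ((eval_contDiff 1 1).sub contDiff_const)
      intro x hx
      have := abs_lt.1 (by simpa using entry_lt hx 1 1)
      linarith [this.1]
    · simp only [AA_mk2]
      apply smooth_sqrt_aff (f := fun R => R 2 2 - 1/2) ((eval_contDiff 2 2).sub contDiff_const)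
      intro x hx
      have := abs_lt.1 (by simpa using entry_lt hx 2 2)
      linarith [this.1]
    · simp only [AA_mk3]
      apply smooth_sqrt_aff (f := fun R => 1/4 + R 0 1) (contDiff_const.add (eval_contDiff 0 1))
      intro x hx
      have := abs_lt.1 (by simpa using entry_lt hx 0 1)
      linarith [this.1]
    · simp only [AA_mk4]
      apply smooth_sqrt_aff (f := fun R => 1/4 - R 0 1) (contDiff_const.sub (eval_contDiff 0 1))
      intro x hx
      have := abs_lt.1 (by simpa using entry_lt hx 0 1)
      linarith [this.2]
    · simp only [AA_mk5]
      apply smooth_sqrt_aff (f := fun R => 1/4 + R 0 2) (contDiff_const.add (eval_contDiff 0 2))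
      intro x hx
      have := abs_lt.1 (by simpa using entry_lt hx 0 2)
      linarith [this.1]
    · simp only [AA_mk6]
      apply smooth_sqrt_aff (f := fun R => 1/4 - R 0 2) (contDiff_const.sub (eval_contDiff 0 2))
      intro x hx
      have := abs_lt.1 (by simpa using entry_lt hx 0 2)
      linarith [this.2]
    · simp only [AA_mk7]
      apply smooth_sqrt_aff (f := fun R => 1/4 + R 1 2) (contDiff_const.add (eval_contDiff 1 2))
      intro x hx
      have := abs_lt.1 (by simpa using entry_lt hx 1 2)
      linarith [this.1]
    · simp only [AA_mk8]
      apply smooth_sqrt_aff (f := fun R => 1/4 - R 1 2) (contDiff_const.sub (eval_contDiff 1 2))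
      intro x hx
      have := abs_lt.1 (by simpa using entry_lt hx 1 2)
      linarith [this.2]
  · intro R hsym hball _
    have b00 := abs_lt.1 (by simpa using entry_lt hball 0 0)
    have b11 := abs_lt.1 (by simpa using entry_lt hball 1 1)
    have b22 := abs_lt.1 (by simpa using entry_lt hball 2 2)
    have b01 := abs_lt.1 (by simpa using entry_lt hball 0 1)
    have b02 := abs_lt.1 (by simpa using entry_lt hball 0 2)
    have b12 := abs_lt.1 (by simpa using entry_lt hball 1 2)
    have s0 : Real.sqrt (R 0 0 - 1/2) ^ 2 = R 0 0 - 1/2 := Real.sq_sqrt (by linarith [b00.1])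
    have s1 : Real.sqrt (R 1 1 - 1/2) ^ 2 = R 1 1 - 1/2 := Real.sq_sqrt (by linarith [b11.1])
    have s2 : Real.sqrt (R 2 2 - 1/2) ^ 2 = R 2 2 - 1/2 := Real.sq_sqrt (by linarith [b22.1])
    have s3 : Real.sqrt (1/4 + R 0 1) ^ 2 = 1/4 + R 0 1 := Real.sq_sqrt (by linarith [b01.1])
    have s4 : Real.sqrt (1/4 - R 0 1) ^ 2 = 1/4 - R 0 1 := Real.sq_sqrt (by linarith [b01.2])
    have s5 : Real.sqrt (1/4 + R 0 2) ^ 2 = 1/4 + R 0 2 := Real.sq_sqrt (by linarith [b02.1])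
    have s6 : Real.sqrt (1/4 - R 0 2) ^ 2 = 1/4 - R 0 2 := Real.sq_sqrt (by linarith [b02.2])
    have s7 : Real.sqrt (1/4 + R 1 2) ^ 2 = 1/4 + R 1 2 := Real.sq_sqrt (by linarith [b12.1])
    have s8 : Real.sqrt (1/4 - R 1 2) ^ 2 = 1/4 - R 1 2 := Real.sq_sqrt (by linarith [b12.2])
    rw [sum9]
    funext i i'
    simp only [Pi.add_apply, Pi.smul_apply, smul_eq_mul, AA_0, AA_1, AA_2, AA_3, AA_4,
      AA_5, AA_6, AA_7, AA_8, KB_0, KB_1, KB_2, KB_3, KB_4, KB_5, KB_6, KB_7, KB_8]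
    fin_cases i <;> fin_cases i' <;>
      · simp only [Matrix.cons_val_zero, Matrix.cons_val_one, Matrix.head_cons,
          Matrix.cons_val_two, Matrix.tail_cons, vec3_mk0, vec3_mk1, vec3_mk2, fin3_mk0, fin3_mk1, fin3_mk2,
          s0, s1, s2, s3, s4, s5, s6, s7, s8]
        ring_nf
        simp only [sq2_sq]
        ring_nf
        try linarith [hsym 0 1, hsym 0 2, hsym 1 2, hsym 1 0, hsym 2 0, hsym 2 1]
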